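/- There exists a quaternate Dyck crossword picture that is not neutralizable; hence DN₁ is strictly included in DQ₁. In particular, there is a picture in DQ₁ containing two rectangles α, β with α ≺ β and β ≺ α in the precedence relation. -/

import Mathlib

/-!
Inclusion: follow a neutralization backwards. Undoing a step re-inserts a matched pair into the
rows and columns crossing its box, so these stay Dyck words once `N` is erased, and every
rectangle read after erasing `N` stays a rectangle. Hence each neutralized box is a rectangle of
the original picture, and every cell is neutralized as a corner of one.

Strictness: matching partners in a Dyck word are unique, so two rectangles sharing a corner
coincide. A rectangle still intact when a box is neutralized therefore has no corner in that
box, and ranking rectangles by the order of their neutralization makes priority strictly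
increasing: on neutralizable pictures `≺` is acyclic. The `6 × 6` picture `pinwheel` is
quaternate, yet four of its rectangles form a priority cycle.
-/

/-- The alphabet Δ₁ = {a, b, c, d}. -/
inductive Del : Type
  | a | b | c | d
deriving DecidableEq

/-- Row cancellation: pairs [a,b] and [c,d]. -/
def rowStep (w w' : List Del) : Prop :=
  ∃ (u v : List Del),
    (w = u ++ [Del.a, Del.b] ++ v ∨ w = u ++ [Del.c, Del.d] ++ v) ∧ w' = u ++ v

/-- The row Dyck language D^Row. -/
def DRow (w : List Del) : Prop := Relation.ReflTransGen rowStep w []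

/-- Column cancellation: pairs [a,c] and [b,d]. -/
def colStep (w w' : List Del) : Prop :=
  ∃ (u v : List Del),
    (w = u ++ [Del.a, Del.c] ++ v ∨ w = u ++ [Del.b, Del.d] ++ v) ∧ w' = u ++ v

/-- The column Dyck language D^Col. -/
def DCol (w : List Del) : Prop := Relation.ReflTransGen colStep w []

/-- Row i (of length n) of a picture. -/
def row (p : ℕ → ℕ → Del) (n i : ℕ) : List Del := (List.range n).map (p i)

/-- Column j (of length m) of a picture. -/
def col (p : ℕ → ℕ → Del) (m j : ℕ) : List Del :=
  (List.range m).map (fun i => p i j)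

/-- The Dyck crossword language DC₁: nonempty pictures all of whose rows
are in D^Row and all of whose columns are in D^Col. -/
def DC (m n : ℕ) (p : ℕ → ℕ → Del) : Prop :=
  1 ≤ m ∧ 1 ≤ n ∧ (∀ i < m, DRow (row p n i)) ∧ (∀ j < n, DCol (col p m j))

/-- Positions `j < j'` match in a row word: the letters form a row matching
pair ([a,b] or [c,d]) and the factor strictly between them is in D^Row. -/
def rowMatchW (w : List Del) (j j' : ℕ) : Prop :=
  j < j' ∧ j' < w.length ∧
    ((w[j]? = some Del.a ∧ w[j']? = some Del.b) ∨
      (w[j]? = some Del.c ∧ w[j']? = some Del.d)) ∧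
    DRow ((w.drop (j + 1)).take (j' - (j + 1)))

/-- Positions `i < i'` match in a column word: the letters form a column
matching pair ([a,c] or [b,d]) and the factor strictly between them is in
D^Col. -/
def colMatchW (w : List Del) (i i' : ℕ) : Prop :=
  i < i' ∧ i' < w.length ∧
    ((w[i]? = some Del.a ∧ w[i']? = some Del.c) ∨
      (w[i]? = some Del.b ∧ w[i']? = some Del.d)) ∧
    DCol ((w.drop (i + 1)).take (i' - (i + 1)))

/-- Row edge of the matching graph of picture `p` (of size m×n) between cells
`u` and `v`: same row, matched positions (in either order). -/
def rowEdge (p : ℕ → ℕ → Del) (n : ℕ) (u v : ℕ × ℕ) : Prop :=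
  u.1 = v.1 ∧ (rowMatchW (row p n u.1) u.2 v.2 ∨ rowMatchW (row p n u.1) v.2 u.2)

/-- Column edge of the matching graph between cells `u` and `v`. -/
def colEdge (p : ℕ → ℕ → Del) (m : ℕ) (u v : ℕ × ℕ) : Prop :=
  u.2 = v.2 ∧ (colMatchW (col p m u.2) u.1 v.1 ∨ colMatchW (col p m u.2) v.1 u.1)

/-- Adjacency in the matching graph. -/
def adj (p : ℕ → ℕ → Del) (m n : ℕ) (u v : ℕ × ℕ) : Prop :=
  rowEdge p n u v ∨ colEdge p m u v

/-- The alphabet Δ₁ ∪ {N}. -/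
inductive DelN : Type
  | a | b | c | d | N
deriving DecidableEq

def embed : Del → DelN
  | Del.a => DelN.a
  | Del.b => DelN.b
  | Del.c => DelN.c
  | Del.d => DelN.d

/-- One neutralization step inside an m×n picture: a subpicture of size at
least 2×2 whose four corners are a, b, c, d and whose remaining cells are
all N is replaced by an all-N subpicture. -/
def nstep (m n : ℕ) (q q' : ℕ → ℕ → DelN) : Prop :=
  ∃ (i j i' j' : ℕ), i < i' ∧ j < j' ∧ i' < m ∧ j' < n ∧
    q i j = DelN.a ∧ q i j' = DelN.b ∧ q i' j = DelN.c ∧ q i' j' = DelN.d ∧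
    (∀ r s, i ≤ r → r ≤ i' → j ≤ s → s ≤ j' →
      ¬((r = i ∨ r = i') ∧ (s = j ∨ s = j')) → q r s = DelN.N) ∧
    (∀ r s, (i ≤ r ∧ r ≤ i' ∧ j ≤ s ∧ s ≤ j') → q' r s = DelN.N) ∧
    (∀ r s, ¬(i ≤ r ∧ r ≤ i' ∧ j ≤ s ∧ s ≤ j') → q' r s = q r s)

/-- The neutralizable Dyck language DN₁: nonempty pictures over Δ₁ that can
be transformed into the all-N picture by neutralization steps. -/
def DN (m n : ℕ) (p : ℕ → ℕ → Del) : Prop :=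
  1 ≤ m ∧ 1 ≤ n ∧
    ∃ q : ℕ → ℕ → DelN,
      Relation.ReflTransGen (nstep m n) (fun r s => embed (p r s)) q ∧
      ∀ r < m, ∀ s < n, q r s = DelN.N

/-- `(r, s)` is a corner of the rectangle `R = (i, j, i', j')`. -/
def cornerOf (R : ℕ × ℕ × ℕ × ℕ) (r s : ℕ) : Prop :=
  (r = R.1 ∨ r = R.2.2.1) ∧ (s = R.2.1 ∨ s = R.2.2.2)

/-- `(r, s)` lies inside the bounding box of rectangle `R` or on its sides. -/
def inBox (R : ℕ × ℕ × ℕ × ℕ) (r s : ℕ) : Prop :=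
  R.1 ≤ r ∧ r ≤ R.2.2.1 ∧ R.2.1 ≤ s ∧ s ≤ R.2.2.2

/-- `R = (i, j, i', j')` is a rectangle (length-4 circuit) of the matching
graph of picture `p`: its four sides are row and column matching edges. -/
def IsRect (m n : ℕ) (p : ℕ → ℕ → Del) (R : ℕ × ℕ × ℕ × ℕ) : Prop :=
  R.1 < R.2.2.1 ∧ R.2.1 < R.2.2.2 ∧ R.2.2.1 < m ∧ R.2.2.2 < n ∧
  rowMatchW (row p n R.1) R.2.1 R.2.2.2 ∧
  rowMatchW (row p n R.2.2.1) R.2.1 R.2.2.2 ∧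
  colMatchW (col p m R.2.1) R.1 R.2.2.1 ∧
  colMatchW (col p m R.2.2.2) R.1 R.2.2.1

/-- The quaternate Dyck language DQ₁: DC₁ pictures all of whose matching
circuits have length 4, i.e. each cell is a corner of a rectangle. -/
def DQ (m n : ℕ) (p : ℕ → ℕ → Del) : Prop :=
  DC m n p ∧
    ∀ r < m, ∀ s < n, ∃ R, IsRect m n p R ∧ cornerOf R r s

/-- Rectangle `α` has priority over rectangle `β` (α must be neutralized
before β): some corner of `α` falls inside `β`'s bounding box or on its
sides. -/
def prio (m n : ℕ) (p : ℕ → ℕ → Del) (α β : ℕ × ℕ × ℕ × ℕ) : Prop :=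
  IsRect m n p α ∧ IsRect m n p β ∧ α ≠ β ∧
    ∃ r s, cornerOf α r s ∧ inBox β r s

/-- The precedence relation ≺: transitive closure of priority. -/
def prec (m n : ℕ) (p : ℕ → ℕ → Del) : (ℕ × ℕ × ℕ × ℕ) → (ℕ × ℕ × ℕ × ℕ) → Prop :=
  Relation.TransGen (prio m n p)

namespace Bracket

variable {α : Type*} (close : α → Option α)

def PairStep (w w' : List α) : Prop :=
  ∃ u v x y, close x = some y ∧ w = u ++ [x, y] ++ v ∧ w' = u ++ v

def IsBalanced (w : List α) : Prop :=
  Relation.ReflTransGen (PairStep close) w []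

/-- Reads `w` left to right with a stack `S` of pending closing brackets. -/
def scan [DecidableEq α] : List α → List α → Option (List α)
  | [], S => some S
  | x :: w, S =>
    match close x, S with
    | some y, _ => scan w (y :: S)
    | none, [] => none
    | none, y :: S => if x = y then scan w S else none

def IsMatch (w : List α) (j k : ℕ) : Prop :=
  j < k ∧ (∃ x y, w[j]? = some x ∧ w[k]? = some y ∧ close x = some y) ∧
    IsBalanced close ((w.drop (j + 1)).take (k - (j + 1)))

variable {close}

theorem PairStep.cons {w w' : List α} (h : PairStep close w w') (x : α) :
    PairStep close (x :: w) (x :: w') := by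
  obtain ⟨u, v, y, z, hyz, rfl, rfl⟩ := h
  exact ⟨x :: u, v, y, z, hyz, rfl, rfl⟩

theorem IsBalanced.insert {u v : List α} {x y : α} (h : IsBalanced close (u ++ v))
    (hxy : close x = some y) : IsBalanced close (u ++ [x, y] ++ v) :=
  .head ⟨u, v, x, y, hxy, rfl, rfl⟩ h

theorem drop_take_eq_append_cons {w : List α} {j k l : ℕ} {y : α} (hjk : j < k) (hkl : k < l)
    (hk : w[k]? = some y) :
    (w.drop (j + 1)).take (l - (j + 1)) =
      (w.drop (j + 1)).take (k - (j + 1)) ++ y :: (w.drop (k + 1)).take (l - (k + 1)) := by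
  obtain ⟨hlen, rfl⟩ := List.getElem?_eq_some_iff.mp hk
  rw [show l - (j + 1) = (k - (j + 1)) + (l - (k + 1) + 1) by omega, List.take_add,
    List.drop_drop, show j + 1 + (k - (j + 1)) = k by omega, List.drop_eq_getElem_cons hlen,
    List.take_succ_cons]

section Scan

variable [DecidableEq α]

theorem scan_append (u v S : List α) :
    scan close (u ++ v) S = (scan close u S).bind (scan close v) := by
  induction u generalizing S with
  | nil => rfl
  | cons x u ih =>
    rcases hx : close x with _ | y
    · rcases S with _ | ⟨y, S⟩
      · simp [scan, hx]
      · by_cases hxy : x = y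
        · subst hxy; simp [scan, hx, ih]
        · simp [scan, hx, hxy]
    · simp [scan, hx, ih]

/-- The stack left over by `scan` closes what `w` leaves open. -/
theorem reflTransGen_of_scan {w S T : List α} (h : scan close w S = some T) :
    Relation.ReflTransGen (PairStep close) (w ++ T) S := by
  induction w generalizing S with
  | nil => cases h; rfl
  | cons x w ih =>
    rcases hx : close x with _ | y
    · rcases S with _ | ⟨y, S⟩
      · simp [scan, hx] at h
      · by_cases hxy : x = y
        · subst hxy
          simp only [scan, hx, if_true] at h
          exact (ih h).lift _ fun _ _ hs => hs.cons x
        · simp [scan, hx, hxy] at h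
    · simp only [scan, hx] at h
      exact ((ih h).lift _ fun _ _ hs => hs.cons x).tail ⟨[], S, x, y, hx, rfl, rfl⟩

theorem isBalanced_of_scan {w : List α} (h : scan close w [] = some []) :
    IsBalanced close w := by
  have h' := reflTransGen_of_scan h
  rwa [List.append_nil] at h'

end Scan

variable (hclose : ∀ x y, close x = some y → close y = none)
include hclose

theorem scan_of_isBalanced [DecidableEq α] {w : List α} (h : IsBalanced close w) (S : List α) :
    scan close w S = some S := by
  induction h using Relation.ReflTransGen.head_induction_on generalizing S with
  | refl => rfl
  | head hs _ ih =>
    obtain ⟨u, v, x, y, hxy, rfl, rfl⟩ := hs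
    have hpair : scan close [x, y] = some := by
      funext T
      simp [scan, hxy, hclose x y hxy]
    have := ih S
    rw [scan_append] at this ⊢
    rw [scan_append, Option.bind_assoc]
    simpa [hpair] using this

theorem isBalanced_iff_scan [DecidableEq α] {w : List α} :
    IsBalanced close w ↔ scan close w [] = some [] :=
  ⟨fun h => scan_of_isBalanced hclose h [], isBalanced_of_scan⟩

theorem not_isBalanced_balanced_append_cons {F G : List α} {y : α} (hF : IsBalanced close F)
    (hy : close y = none) : ¬ IsBalanced close (F ++ y :: G) := by
  classical
  intro h
  have := scan_of_isBalanced hclose h []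
  rw [scan_append, scan_of_isBalanced hclose hF] at this
  simp [scan, hy] at this

theorem not_isBalanced_append_cons_balanced {P F : List α} {x y : α} (hF : IsBalanced close F)
    (hxy : close x = some y) : ¬ IsBalanced close (P ++ x :: F) := by
  classical
  intro h
  have := scan_of_isBalanced hclose h []
  rw [scan_append] at this
  obtain ⟨S, hS, hxF⟩ := Option.bind_eq_some_iff.mp this
  simp [scan, hxy, scan_of_isBalanced hclose hF] at hxF

theorem IsMatch.right_unique {w : List α} {j k k' : ℕ} (h : IsMatch close w j k)
    (h' : IsMatch close w j k') : k = k' := by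
  wlog hlt : k < k' generalizing k k'
  · obtain hlt' | rfl := (not_lt.mp hlt).lt_or_eq
    exacts [(this h' h hlt').symm, rfl]
  obtain ⟨hjk, ⟨x, y, hx, hy, hxy⟩, hbal⟩ := h
  obtain ⟨-, -, hbal'⟩ := h'
  rw [drop_take_eq_append_cons hjk hlt hy] at hbal'
  exact absurd hbal' (not_isBalanced_balanced_append_cons hclose hbal (hclose x y hxy))

theorem IsMatch.left_unique {w : List α} {j j' k : ℕ} (h : IsMatch close w j k)
    (h' : IsMatch close w j' k) : j = j' := by
  wlog hlt : j < j' generalizing j j'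
  · obtain hlt' | rfl := (not_lt.mp hlt).lt_or_eq
    exacts [(this h' h hlt').symm, rfl]
  obtain ⟨-, -, hbal⟩ := h
  obtain ⟨hjk', ⟨x, y, hx, -, hxy⟩, hbal'⟩ := h'
  rw [drop_take_eq_append_cons hlt hjk' hx] at hbal
  exact absurd hbal (not_isBalanced_append_cons_balanced hclose hbal' hxy)

theorem IsMatch.not_isMatch {w : List α} {i j k : ℕ} (h : IsMatch close w i j) :
    ¬ IsMatch close w j k := by
  rintro ⟨-, ⟨x, y, hx, -, hxy⟩, -⟩
  obtain ⟨-, ⟨x', y', -, hy', hxy'⟩, -⟩ := h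
  rw [hx] at hy'
  cases hy'
  simp [hclose x' x hxy'] at hxy

theorem isMatch_partner_unique {w : List α} {j k k' : ℕ}
    (h : IsMatch close w j k ∨ IsMatch close w k j)
    (h' : IsMatch close w j k' ∨ IsMatch close w k' j) : k = k' := by
  rcases h with h | h <;> rcases h' with h' | h'
  · exact h.right_unique hclose h'
  · exact absurd h (h'.not_isMatch hclose)
  · exact absurd h' (h.not_isMatch hclose)
  · exact h.left_unique hclose h'

end Bracket

open Bracket

def rowClose : Del → Option Del
  | .a => some .b
  | .c => some .d
  | _ => none

def colClose : Del → Option Del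
  | .a => some .c
  | .b => some .d
  | _ => none

theorem rowClose_closer : ∀ x y, rowClose x = some y → rowClose y = none := by
  intro x y h; cases x <;> cases y <;> simp_all [rowClose]

theorem colClose_closer : ∀ x y, colClose x = some y → colClose y = none := by
  intro x y h; cases x <;> cases y <;> simp_all [colClose]

theorem rowStep_eq_pairStep : rowStep = PairStep rowClose := by
  ext w w'
  constructor
  · rintro ⟨u, v, rfl | rfl, rfl⟩
    exacts [⟨u, v, .a, .b, rfl, rfl, rfl⟩, ⟨u, v, .c, .d, rfl, rfl, rfl⟩]
  · rintro ⟨u, v, x, y, hxy, rfl, rfl⟩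
    cases x <;> cases y <;> simp [rowClose] at hxy
    exacts [⟨u, v, .inl rfl, rfl⟩, ⟨u, v, .inr rfl, rfl⟩]

theorem colStep_eq_pairStep : colStep = PairStep colClose := by
  ext w w'
  constructor
  · rintro ⟨u, v, rfl | rfl, rfl⟩
    exacts [⟨u, v, .a, .c, rfl, rfl, rfl⟩, ⟨u, v, .b, .d, rfl, rfl, rfl⟩]
  · rintro ⟨u, v, x, y, hxy, rfl, rfl⟩
    cases x <;> cases y <;> simp [colClose] at hxy
    exacts [⟨u, v, .inl rfl, rfl⟩, ⟨u, v, .inr rfl, rfl⟩]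

theorem dRow_eq_isBalanced : DRow = IsBalanced rowClose := by
  funext w
  rw [DRow, IsBalanced, rowStep_eq_pairStep]

theorem dCol_eq_isBalanced : DCol = IsBalanced colClose := by
  funext w
  rw [DCol, IsBalanced, colStep_eq_pairStep]

theorem rowMatchW_iff_isMatch {w : List Del} {j k : ℕ} :
    rowMatchW w j k ↔ IsMatch rowClose w j k := by
  have hpair : ∀ o o' : Option Del,
      ((o = some .a ∧ o' = some .b) ∨ (o = some .c ∧ o' = some .d)) ↔
        ∃ x y, o = some x ∧ o' = some y ∧ rowClose x = some y := by
    rintro (_ | ⟨_ | _ | _ | _⟩) (_ | ⟨_ | _ | _ | _⟩) <;> simp [rowClose]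
  rw [rowMatchW, IsMatch, hpair, dRow_eq_isBalanced]
  constructor
  · rintro ⟨hjk, -, hxy, hbal⟩
    exact ⟨hjk, hxy, hbal⟩
  · rintro ⟨hjk, ⟨x, y, hx, hy, hxy⟩, hbal⟩
    exact ⟨hjk, (List.getElem?_eq_some_iff.mp hy).1, ⟨x, y, hx, hy, hxy⟩, hbal⟩

theorem colMatchW_iff_isMatch {w : List Del} {i k : ℕ} :
    colMatchW w i k ↔ IsMatch colClose w i k := by
  have hpair : ∀ o o' : Option Del,
      ((o = some .a ∧ o' = some .c) ∨ (o = some .b ∧ o' = some .d)) ↔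
        ∃ x y, o = some x ∧ o' = some y ∧ colClose x = some y := by
    rintro (_ | ⟨_ | _ | _ | _⟩) (_ | ⟨_ | _ | _ | _⟩) <;> simp [colClose]
  rw [colMatchW, IsMatch, hpair, dCol_eq_isBalanced]
  constructor
  · rintro ⟨hik, -, hxy, hbal⟩
    exact ⟨hik, hxy, hbal⟩
  · rintro ⟨hik, ⟨x, y, hx, hy, hxy⟩, hbal⟩
    exact ⟨hik, (List.getElem?_eq_some_iff.mp hy).1, ⟨x, y, hx, hy, hxy⟩, hbal⟩

section MatchingGraph

variable {m n : ℕ} {p : ℕ → ℕ → Del}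

theorem rowEdge_unique {u v v' : ℕ × ℕ} (h : rowEdge p n u v) (h' : rowEdge p n u v') :
    v = v' := by
  obtain ⟨hv, h⟩ := h
  obtain ⟨hv', h'⟩ := h'
  simp only [rowMatchW_iff_isMatch] at h h'
  exact Prod.ext (hv.symm.trans hv') (isMatch_partner_unique rowClose_closer h h')

theorem colEdge_unique {u v v' : ℕ × ℕ} (h : colEdge p m u v) (h' : colEdge p m u v') :
    v = v' := by
  obtain ⟨hv, h⟩ := h
  obtain ⟨hv', h'⟩ := h'
  simp only [colMatchW_iff_isMatch] at h h'
  exact Prod.ext (isMatch_partner_unique colClose_closer h h') (hv.symm.trans hv')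

theorem IsRect.exists_partners {R : ℕ × ℕ × ℕ × ℕ} {r s : ℕ} (hR : IsRect m n p R)
    (hc : cornerOf R r s) :
    ∃ r' s', rowEdge p n (r, s) (r, s') ∧ colEdge p m (r, s) (r', s) ∧
      R = (min r r', min s s', max r r', max s s') := by
  obtain ⟨i, j, i', j'⟩ := R
  obtain ⟨hi, hj, -, -, top, bot, left, right⟩ := hR
  rcases hc with ⟨rfl | rfl, rfl | rfl⟩
  · exact ⟨i', j', ⟨rfl, .inl top⟩, ⟨rfl, .inl left⟩, by simp [hi.le, hj.le]⟩
  · exact ⟨i', j, ⟨rfl, .inr top⟩, ⟨rfl, .inl right⟩, by simp [hi.le, hj.le]⟩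
  · exact ⟨i, j', ⟨rfl, .inl bot⟩, ⟨rfl, .inr left⟩, by simp [hi.le, hj.le]⟩
  · exact ⟨i, j, ⟨rfl, .inr bot⟩, ⟨rfl, .inr right⟩, by simp [hi.le, hj.le]⟩

theorem IsRect.eq_of_cornerOf {A B : ℕ × ℕ × ℕ × ℕ} {r s : ℕ} (hA : IsRect m n p A)
    (hB : IsRect m n p B) (hcA : cornerOf A r s) (hcB : cornerOf B r s) : A = B := by
  obtain ⟨r₁, s₁, hrow₁, hcol₁, rfl⟩ := hA.exists_partners hcA
  obtain ⟨r₂, s₂, hrow₂, hcol₂, rfl⟩ := hB.exists_partners hcB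
  cases rowEdge_unique hrow₁ hrow₂
  cases colEdge_unique hcol₁ hcol₂
  rfl

end MatchingGraph

section Slices

variable {β : Type*}

def slice (f : ℕ → β) (lo hi : ℕ) : List β :=
  (List.range' lo (hi - lo)).map f

theorem slice_eq_append_cons (f : ℕ → β) {lo k hi : ℕ} (hlo : lo ≤ k) (hhi : k < hi) :
    slice f lo hi = slice f lo k ++ f k :: slice f (k + 1) hi := by
  rw [slice, show hi - lo = (k - lo) + ((hi - (k + 1)) + 1) by omega, ← List.range'_append_1,
    List.range'_succ]
  simp [slice, show lo + (k - lo) = k by omega]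

theorem slice_congr {f g : ℕ → β} {lo hi : ℕ} (h : ∀ s, lo ≤ s → s < hi → f s = g s) :
    slice f lo hi = slice g lo hi :=
  List.map_congr_left fun s hs => by
    rw [List.mem_range'_1] at hs
    exact h s hs.1 (by omega)

theorem drop_take_map_range (f : ℕ → β) {n k l : ℕ} (hl : l ≤ n) :
    (((List.range n).map f).drop k).take (l - k) = slice f k l := by
  rw [← List.map_drop, ← List.map_take, List.range_eq_range', List.drop_range',
    List.take_range'_of_length_ge (by omega)]
  simp [slice]

end Slices

def toDel : DelN → Option Del
  | .a => some .a
  | .b => some .b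
  | .c => some .c
  | .d => some .d
  | .N => none

def eraseN (l : List DelN) : List Del :=
  l.filterMap toDel

@[simp]
theorem toDel_embed (x : Del) : toDel (embed x) = some x := by
  cases x <;> rfl

@[simp]
theorem toDel_N : toDel .N = none :=
  rfl

theorem embed_ne_N (x : Del) : embed x ≠ .N := by
  cases x <;> simp [embed]

theorem embed_injective : Function.Injective embed := by
  intro x y h
  cases x <;> cases y <;> simp_all [embed]

theorem eraseN_slice_of_eq_N {F : ℕ → DelN} {lo hi : ℕ}
    (h : ∀ s, lo ≤ s → s < hi → F s = .N) : eraseN (slice F lo hi) = [] := by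
  simp only [eraseN, slice, List.filterMap_map, List.filterMap_eq_nil_iff, List.mem_range'_1]
  intro s hs
  simp [h s hs.1 (by omega), toDel]

theorem eraseN_slice_embed (f : ℕ → Del) (lo hi : ℕ) :
    eraseN (slice (fun s => embed (f s)) lo hi) = slice f lo hi := by
  simp [eraseN, slice, List.filterMap_map]

/-- `F` is a line before, `G` the same line after neutralizing the pair at `p₁ < p₂`. -/
theorem isBalanced_eraseN_of_neutralize {close : Del → Option Del} {F G : ℕ → DelN}
    {p₁ p₂ lo hi : ℕ} {x y : Del} (hxy : close x = some y) (hlo : lo ≤ p₁) (hp : p₁ < p₂)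
    (hhi : p₂ < hi) (hx : F p₁ = embed x) (hy : F p₂ = embed y)
    (hF : ∀ s, p₁ < s → s < p₂ → F s = .N) (hG : ∀ s, p₁ ≤ s → s ≤ p₂ → G s = .N)
    (hFG : ∀ s, s ≠ p₁ → s ≠ p₂ → G s = F s) (h : IsBalanced close (eraseN (slice G lo hi))) :
    IsBalanced close (eraseN (slice F lo hi)) := by
  have hsplit : ∀ H : ℕ → DelN, slice H lo hi =
      slice H lo p₁ ++ H p₁ :: (slice H (p₁ + 1) p₂ ++ H p₂ :: slice H (p₂ + 1) hi) :=
    fun H => by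
      rw [slice_eq_append_cons H hlo (by omega), slice_eq_append_cons H (k := p₂) (by omega) hhi]
  have hl : slice G lo p₁ = slice F lo p₁ := slice_congr fun s _ hs => hFG s (by omega) (by omega)
  have hr : slice G (p₂ + 1) hi = slice F (p₂ + 1) hi :=
    slice_congr fun s hs _ => hFG s (by omega) (by omega)
  have hmidF : eraseN (slice F (p₁ + 1) p₂) = [] :=
    eraseN_slice_of_eq_N fun s h₁ h₂ => hF s (by omega) h₂
  have hmidG : eraseN (slice G (p₁ + 1) p₂) = [] :=
    eraseN_slice_of_eq_N fun s h₁ h₂ => hG s (by omega) h₂.le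
  rw [hsplit, hl, hr] at h
  rw [hsplit]
  simp only [eraseN, List.filterMap_append, List.filterMap_cons] at h hmidF hmidG ⊢
  simpa [hx, hy, hG p₁ le_rfl hp.le, hG p₂ hp.le le_rfl, toDel_N, hmidF, hmidG] using h.insert hxy

section Neutralization

variable {m n : ℕ} {q q' : ℕ → ℕ → DelN} {B R : ℕ × ℕ × ℕ × ℕ}

structure IsABCDBox (m n : ℕ) (q : ℕ → ℕ → DelN) (R : ℕ × ℕ × ℕ × ℕ) : Prop where
  row_lt : R.1 < R.2.2.1
  col_lt : R.2.1 < R.2.2.2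
  row_lt_m : R.2.2.1 < m
  col_lt_n : R.2.2.2 < n
  a : q R.1 R.2.1 = .a
  b : q R.1 R.2.2.2 = .b
  c : q R.2.2.1 R.2.1 = .c
  d : q R.2.2.1 R.2.2.2 = .d

/-- A rectangle of a partially neutralized picture: `IsRect` read after erasing `N`. -/
structure IsNRect (m n : ℕ) (q : ℕ → ℕ → DelN) (R : ℕ × ℕ × ℕ × ℕ) : Prop
    extends IsABCDBox m n q R where
  top : DRow (eraseN (slice (q R.1) (R.2.1 + 1) R.2.2.2))
  bot : DRow (eraseN (slice (q R.2.2.1) (R.2.1 + 1) R.2.2.2))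
  left : DCol (eraseN (slice (fun r => q r R.2.1) (R.1 + 1) R.2.2.1))
  right : DCol (eraseN (slice (fun r => q r R.2.2.2) (R.1 + 1) R.2.2.1))

/-- `nstep m n q q'` with its box `B` made explicit. -/
structure IsNeutralization (m n : ℕ) (B : ℕ × ℕ × ℕ × ℕ) (q q' : ℕ → ℕ → DelN) : Prop
    extends IsABCDBox m n q B where
  interior : ∀ r s, inBox B r s → ¬ cornerOf B r s → q r s = .N
  box : ∀ r s, inBox B r s → q' r s = .N
  outside : ∀ r s, ¬ inBox B r s → q' r s = q r s

theorem nstep.exists_isNeutralization (h : nstep m n q q') :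
    ∃ B, IsNeutralization m n B q q' := by
  obtain ⟨i, j, i', j', hi, hj, hm, hn, ha, hb, hc, hd, hint, hbox, hout⟩ := h
  exact ⟨(i, j, i', j'), ⟨hi, hj, hm, hn, ha, hb, hc, hd⟩,
    fun r s ⟨h₁, h₂, h₃, h₄⟩ => hint r s h₁ h₂ h₃ h₄, hbox, hout⟩

namespace IsNeutralization

variable (h : IsNeutralization m n B q q')
include h

theorem frame {r s : ℕ} (hc : ¬ cornerOf B r s) : q' r s = q r s := by
  by_cases hin : inBox B r s
  · rw [h.box r s hin, h.interior r s hin hc]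
  · exact h.outside r s hin

theorem isNRect : IsNRect m n q B := by
  have := h.row_lt
  have := h.col_lt
  refine ⟨h.toIsABCDBox, ?_, ?_, ?_, ?_⟩ <;>
  · rw [eraseN_slice_of_eq_N fun _ _ _ => h.interior _ _ (by unfold inBox; omega)
      (by unfold cornerOf; omega)]
    exact .refl

theorem dRow_of_dRow {I lo hi : ℕ}
    (hcover : ∀ s, lo ≤ s → s < hi → cornerOf B I s → lo ≤ B.2.1 ∧ B.2.2.2 < hi)
    (h' : DRow (eraseN (slice (q' I) lo hi))) : DRow (eraseN (slice (q I) lo hi)) := by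
  have := h.row_lt
  rw [dRow_eq_isBalanced] at h' ⊢
  by_cases hI : (I = B.1 ∨ I = B.2.2.1) ∧ lo ≤ B.2.1 ∧ B.2.2.2 < hi
  · obtain ⟨hI | hI, hlo, hhi⟩ := hI <;> subst hI
    · exact isBalanced_eraseN_of_neutralize (x := .a) (y := .b) rfl hlo h.col_lt hhi h.a h.b
        (fun s h₁ h₂ => h.interior _ _ (by unfold inBox; omega) (by unfold cornerOf; omega))
        (fun s h₁ h₂ => h.box _ _ (by unfold inBox; omega))
        (fun s h₁ h₂ => h.frame (by unfold cornerOf; omega)) h'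
    · exact isBalanced_eraseN_of_neutralize (x := .c) (y := .d) rfl hlo h.col_lt hhi h.c h.d
        (fun s h₁ h₂ => h.interior _ _ (by unfold inBox; omega) (by unfold cornerOf; omega))
        (fun s h₁ h₂ => h.box _ _ (by unfold inBox; omega))
        (fun s h₁ h₂ => h.frame (by unfold cornerOf; omega)) h'
  · rwa [slice_congr fun s h₁ h₂ => h.frame fun hc => hI ⟨hc.1, hcover s h₁ h₂ hc⟩] at h'

theorem dCol_of_dCol {J lo hi : ℕ}
    (hcover : ∀ r, lo ≤ r → r < hi → cornerOf B r J → lo ≤ B.1 ∧ B.2.2.1 < hi)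
    (h' : DCol (eraseN (slice (fun r => q' r J) lo hi))) :
    DCol (eraseN (slice (fun r => q r J) lo hi)) := by
  have := h.col_lt
  rw [dCol_eq_isBalanced] at h' ⊢
  by_cases hJ : (J = B.2.1 ∨ J = B.2.2.2) ∧ lo ≤ B.1 ∧ B.2.2.1 < hi
  · obtain ⟨hJ | hJ, hlo, hhi⟩ := hJ <;> subst hJ
    · exact isBalanced_eraseN_of_neutralize (x := .a) (y := .c) rfl hlo h.row_lt hhi h.a h.c
        (fun r h₁ h₂ => h.interior _ _ (by unfold inBox; omega) (by unfold cornerOf; omega))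
        (fun r h₁ h₂ => h.box _ _ (by unfold inBox; omega))
        (fun r h₁ h₂ => h.frame (by unfold cornerOf; omega)) h'
    · exact isBalanced_eraseN_of_neutralize (x := .b) (y := .d) rfl hlo h.row_lt hhi h.b h.d
        (fun r h₁ h₂ => h.interior _ _ (by unfold inBox; omega) (by unfold cornerOf; omega))
        (fun r h₁ h₂ => h.box _ _ (by unfold inBox; omega))
        (fun r h₁ h₂ => h.frame (by unfold cornerOf; omega)) h'
  · rwa [slice_congr fun r h₁ h₂ => h.frame fun hc => hJ ⟨hc.2, hcover r h₁ h₂ hc⟩] at h'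

/-- The corners of a rectangle surviving the step lie outside its box, so each side of the
rectangle either crosses the box completely or misses its corners. -/
theorem isNRect_of_isNRect (hR : IsNRect m n q' R) : IsNRect m n q R := by
  have hout : ∀ r s, q' r s ≠ .N → ¬ inBox B r s := fun r s hN hin => hN (h.box r s hin)
  have ha := hout R.1 R.2.1 (by simp [hR.a])
  have hb := hout R.1 R.2.2.2 (by simp [hR.b])
  have hc := hout R.2.2.1 R.2.1 (by simp [hR.c])
  have hd := hout R.2.2.1 R.2.2.2 (by simp [hR.d])
  have := h.row_lt
  have := h.col_lt
  have := hR.row_lt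
  have := hR.col_lt
  unfold inBox at ha hb hc hd
  refine ⟨⟨hR.row_lt, hR.col_lt, hR.row_lt_m, hR.col_lt_n, ?_, ?_, ?_, ?_⟩, ?_, ?_, ?_, ?_⟩
  · rw [← h.outside _ _ ha, hR.a]
  · rw [← h.outside _ _ hb, hR.b]
  · rw [← h.outside _ _ hc, hR.c]
  · rw [← h.outside _ _ hd, hR.d]
  · exact h.dRow_of_dRow (fun s _ _ hs => by unfold cornerOf at hs; omega) hR.top
  · exact h.dRow_of_dRow (fun s _ _ hs => by unfold cornerOf at hs; omega) hR.bot
  · exact h.dCol_of_dCol (fun r _ _ hr => by unfold cornerOf at hr; omega) hR.left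
  · exact h.dCol_of_dCol (fun r _ _ hr => by unfold cornerOf at hr; omega) hR.right

end IsNeutralization

end Neutralization

section Reduction

variable {m n : ℕ} {p : ℕ → ℕ → Del} {q qf : ℕ → ℕ → DelN} {R : ℕ × ℕ × ℕ × ℕ}

theorem row_eq_slice (p : ℕ → ℕ → Del) (n i : ℕ) : row p n i = slice (p i) 0 n := by
  simp [row, slice, List.range_eq_range']

theorem col_eq_slice (p : ℕ → ℕ → Del) (m j : ℕ) : col p m j = slice (fun r => p r j) 0 m := by
  simp [col, slice, List.range_eq_range']

theorem rowMatchW_row {i j j' : ℕ} (hj : j < j') (hj' : j' < n)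
    (hpair : (p i j = .a ∧ p i j' = .b) ∨ (p i j = .c ∧ p i j' = .d))
    (hbal : DRow (slice (p i) (j + 1) j')) : rowMatchW (row p n i) j j' := by
  refine ⟨hj, by simpa [row] using hj', by simpa [row, hj', hj.trans hj'] using hpair, ?_⟩
  rwa [row, drop_take_map_range _ hj'.le]

theorem colMatchW_col {j i i' : ℕ} (hi : i < i') (hi' : i' < m)
    (hpair : (p i j = .a ∧ p i' j = .c) ∨ (p i j = .b ∧ p i' j = .d))
    (hbal : DCol (slice (fun r => p r j) (i + 1) i')) : colMatchW (col p m j) i i' := by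
  refine ⟨hi, by simpa [col] using hi', by simpa [col, hi', hi.trans hi'] using hpair, ?_⟩
  rwa [col, drop_take_map_range _ hi'.le]

theorem IsNRect.isRect (hR : IsNRect m n (fun r s => embed (p r s)) R) : IsRect m n p R := by
  have ha : p R.1 R.2.1 = .a := embed_injective (a₂ := .a) hR.a
  have hb : p R.1 R.2.2.2 = .b := embed_injective (a₂ := .b) hR.b
  have hc : p R.2.2.1 R.2.1 = .c := embed_injective (a₂ := .c) hR.c
  have hd : p R.2.2.1 R.2.2.2 = .d := embed_injective (a₂ := .d) hR.d
  have htop := hR.top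
  have hbot := hR.bot
  have hleft := hR.left
  have hright := hR.right
  simp only [eraseN_slice_embed] at htop hbot hleft hright
  exact ⟨hR.row_lt, hR.col_lt, hR.row_lt_m, hR.col_lt_n,
    rowMatchW_row hR.col_lt hR.col_lt_n (.inl ⟨ha, hb⟩) htop,
    rowMatchW_row hR.col_lt hR.col_lt_n (.inr ⟨hc, hd⟩) hbot,
    colMatchW_col hR.row_lt hR.row_lt_m (.inl ⟨ha, hc⟩) hleft,
    colMatchW_col hR.row_lt hR.row_lt_m (.inr ⟨hb, hd⟩) hright⟩

theorem IsNRect.of_reflTransGen {q' : ℕ → ℕ → DelN}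
    (hred : Relation.ReflTransGen (nstep m n) q q') (hR : IsNRect m n q' R) : IsNRect m n q R := by
  induction hred using Relation.ReflTransGen.head_induction_on with
  | refl => exact hR
  | head hstep _ ih =>
    obtain ⟨B, h⟩ := hstep.exists_isNeutralization
    exact h.isNRect_of_isNRect ih

theorem IsNeutralization.isRect {B : ℕ × ℕ × ℕ × ℕ} {q' : ℕ → ℕ → DelN}
    (h : IsNeutralization m n B q q')
    (hq : Relation.ReflTransGen (nstep m n) (fun r s => embed (p r s)) q) : IsRect m n p B :=
  (h.isNRect.of_reflTransGen hq).isRect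

theorem lines_balanced_of_reflTransGen (hred : Relation.ReflTransGen (nstep m n) q qf)
    (hfin : ∀ r < m, ∀ s < n, qf r s = .N) :
    (∀ i < m, DRow (eraseN (slice (q i) 0 n))) ∧
      ∀ j < n, DCol (eraseN (slice (fun r => q r j) 0 m)) := by
  induction hred using Relation.ReflTransGen.head_induction_on with
  | refl =>
    refine ⟨fun i hi => ?_, fun j hj => ?_⟩
    · rw [eraseN_slice_of_eq_N fun s _ hs => hfin i hi s hs]
      exact .refl
    · rw [eraseN_slice_of_eq_N fun r _ hr => hfin r hr j hj]
      exact .refl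
  | head hstep _ ih =>
    obtain ⟨B, h⟩ := hstep.exists_isNeutralization
    exact ⟨fun i hi => h.dRow_of_dRow (fun _ _ _ _ => ⟨Nat.zero_le _, h.col_lt_n⟩) (ih.1 i hi),
      fun j hj => h.dCol_of_dCol (fun _ _ _ _ => ⟨Nat.zero_le _, h.row_lt_m⟩) (ih.2 j hj)⟩

/-- A cell is only ever neutralized as a corner of the box of some step. -/
theorem exists_isRect_cornerOf_of_reflTransGen
    (hreach : Relation.ReflTransGen (nstep m n) (fun r s => embed (p r s)) q)
    (hred : Relation.ReflTransGen (nstep m n) q qf) (hfin : ∀ r < m, ∀ s < n, qf r s = .N)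
    {r s : ℕ} (hr : r < m) (hs : s < n) (hN : q r s ≠ .N) :
    ∃ R, IsRect m n p R ∧ cornerOf R r s := by
  induction hred using Relation.ReflTransGen.head_induction_on with
  | refl => exact absurd (hfin r hr s hs) hN
  | head hstep _ ih =>
    obtain ⟨B, h⟩ := hstep.exists_isNeutralization
    by_cases hc : cornerOf B r s
    · exact ⟨B, h.isRect hreach, hc⟩
    · exact ih (hreach.tail hstep) (by rwa [h.frame hc])

theorem DN.dQ (h : DN m n p) : DQ m n p := by
  obtain ⟨hm, hn, qf, hred, hfin⟩ := h
  obtain ⟨hrows, hcols⟩ := lines_balanced_of_reflTransGen hred hfin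
  refine ⟨⟨hm, hn, fun i hi => ?_, fun j hj => ?_⟩, fun r hr s hs =>
    exists_isRect_cornerOf_of_reflTransGen .refl hred hfin hr hs (embed_ne_N _)⟩
  · simpa [row_eq_slice, eraseN_slice_embed] using hrows i hi
  · simpa [col_eq_slice, eraseN_slice_embed] using hcols j hj

end Reduction

section Precedence

variable {m n : ℕ} {p : ℕ → ℕ → Del} {q q' qf : ℕ → ℕ → DelN} {A B : ℕ × ℕ × ℕ × ℕ}

def Intact (q : ℕ → ℕ → DelN) (R : ℕ × ℕ × ℕ × ℕ) : Prop :=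
  ∀ r s, cornerOf R r s → q r s ≠ .N

namespace IsNeutralization

variable (h : IsNeutralization m n B q q') (hB : IsRect m n p B) (hA : IsRect m n p A)
  (hAB : A ≠ B) (hint : Intact q A)
include h hB hA hAB hint

/-- Rectangles sharing a corner coincide, and the rest of the box is already neutral. -/
theorem not_inBox_of_intact {r s : ℕ} (hc : cornerOf A r s) : ¬ inBox B r s := by
  intro hin
  by_cases hcB : cornerOf B r s
  · exact hAB (hA.eq_of_cornerOf hB hc hcB)
  · exact hint r s hc (h.interior r s hin hcB)

theorem intact : Intact q' A := fun r s hc => by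
  rw [h.outside r s (h.not_inBox_of_intact hB hA hAB hint hc)]
  exact hint r s hc

end IsNeutralization

/-- The rectangle neutralized next has no intact predecessor, so it can be given rank `0`. -/
theorem exists_rank_of_reflTransGen
    (hreach : Relation.ReflTransGen (nstep m n) (fun r s => embed (p r s)) q)
    (hred : Relation.ReflTransGen (nstep m n) q qf) (hfin : ∀ r < m, ∀ s < n, qf r s = .N) :
    ∃ f : ℕ × ℕ × ℕ × ℕ → ℕ, ∀ A B, Intact q A → Intact q B → prio m n p A B → f A < f B := by
  induction hred using Relation.ReflTransGen.head_induction_on with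
  | refl =>
    refine ⟨fun _ => 0, fun A _ hA _ hAB => absurd ?_ (hA _ _ ⟨.inr rfl, .inr rfl⟩)⟩
    exact hfin _ hAB.1.2.2.1 _ hAB.1.2.2.2.1
  | head hstep _ ih =>
    obtain ⟨B₀, h⟩ := hstep.exists_isNeutralization
    have hB₀ := h.isRect hreach
    obtain ⟨f, hf⟩ := ih (hreach.tail hstep)
    classical
    refine ⟨fun R => if R = B₀ then 0 else f R + 1, fun A B hA hB hAB => ?_⟩
    obtain ⟨hRA, hRB, hne, r, s, hc, hin⟩ := id hAB
    by_cases hAB₀ : A = B₀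
    · subst hAB₀
      simp [Ne.symm hne]
    · have hBB₀ : B ≠ B₀ := by
        rintro rfl
        exact h.not_inBox_of_intact hB₀ hRA hAB₀ hA hc hin
      simp only [if_neg hAB₀, if_neg hBB₀]
      exact Nat.succ_lt_succ (hf A B (h.intact hB₀ hRA hAB₀ hA) (h.intact hB₀ hRB hBB₀ hB) hAB)

theorem DN.prec_irrefl (h : DN m n p) (α : ℕ × ℕ × ℕ × ℕ) : ¬ prec m n p α α := by
  obtain ⟨-, -, qf, hred, hfin⟩ := h
  obtain ⟨f, hf⟩ := exists_rank_of_reflTransGen .refl hred hfin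
  have hintact : ∀ R, Intact (fun r s => embed (p r s)) R := fun _ _ _ _ => embed_ne_N _
  have hlt : ∀ A B, prec m n p A B → f A < f B := fun _ _ hAB =>
    hAB.trans_induction_on (fun hAB => hf _ _ (hintact _) (hintact _) hAB)
      fun _ _ h₁ h₂ => h₁.trans h₂
  exact fun hα => lt_irrefl _ (hlt α α hα)

end Precedence

instance : DecidablePred DRow := fun w =>
  decidable_of_iff _ (by rw [dRow_eq_isBalanced, isBalanced_iff_scan rowClose_closer])

instance : DecidablePred DCol := fun w =>
  decidable_of_iff _ (by rw [dCol_eq_isBalanced, isBalanced_iff_scan colClose_closer])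

instance (w : List Del) (j k : ℕ) : Decidable (rowMatchW w j k) := by
  unfold rowMatchW; infer_instance

instance (w : List Del) (i k : ℕ) : Decidable (colMatchW w i k) := by
  unfold colMatchW; infer_instance

instance (m n : ℕ) (p : ℕ → ℕ → Del) (R : ℕ × ℕ × ℕ × ℕ) : Decidable (IsRect m n p R) := by
  unfold IsRect; infer_instance

instance (R : ℕ × ℕ × ℕ × ℕ) (r s : ℕ) : Decidable (cornerOf R r s) := by
  unfold cornerOf; infer_instance

instance (R : ℕ × ℕ × ℕ × ℕ) (r s : ℕ) : Decidable (inBox R r s) := by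
  unfold inBox; infer_instance

open Del in
/-- Four rectangles arranged like the blades of a pinwheel, each with a corner inside the box
of the next, framed by one big rectangle. Entries outside the `6 × 6` picture are junk. -/
def pinwheel (r s : ℕ) : Del :=
  ([[a, a, b, a, b, b],
    [a, c, d, b, a, b],
    [c, a, b, d, c, d],
    [a, b, a, c, d, b],
    [c, d, c, a, b, d],
    [c, c, d, c, d, d]].getD r []).getD s a

def pinwheelRects : List (ℕ × ℕ × ℕ × ℕ) :=
  [(0, 0, 5, 5), (0, 1, 1, 2), (0, 3, 3, 4), (1, 0, 2, 3), (1, 4, 2, 5), (2, 1, 5, 2),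
    (3, 0, 4, 1), (3, 2, 4, 5), (4, 3, 5, 4)]

theorem isRect_pinwheel : ∀ R ∈ pinwheelRects, IsRect 6 6 pinwheel R := by
  decide

theorem dQ_pinwheel : DQ 6 6 pinwheel := by
  have hcover : ∀ r < 6, ∀ s < 6, ∃ R ∈ pinwheelRects, cornerOf R r s := by decide
  refine ⟨⟨by norm_num, by norm_num, by decide, by decide⟩, fun r hr s hs => ?_⟩
  obtain ⟨R, hR, hc⟩ := hcover r hr s hs
  exact ⟨R, isRect_pinwheel R hR, hc⟩

theorem prio_pinwheel {A B : ℕ × ℕ × ℕ × ℕ} (hA : A ∈ pinwheelRects) (hB : B ∈ pinwheelRects)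
    (hAB : A ≠ B) (r s : ℕ) (hc : cornerOf A r s) (hin : inBox B r s) : prio 6 6 pinwheel A B :=
  ⟨isRect_pinwheel A hA, isRect_pinwheel B hB, hAB, r, s, hc, hin⟩

theorem prec_pinwheel : prec 6 6 pinwheel (1, 0, 2, 3) (0, 3, 3, 4) ∧
    prec 6 6 pinwheel (0, 3, 3, 4) (1, 0, 2, 3) := by
  have h₁ : prio 6 6 pinwheel (1, 0, 2, 3) (0, 3, 3, 4) :=
    prio_pinwheel (by decide) (by decide) (by decide) 1 3 (by decide) (by decide)
  have h₂ : prio 6 6 pinwheel (0, 3, 3, 4) (3, 2, 4, 5) :=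
    prio_pinwheel (by decide) (by decide) (by decide) 3 3 (by decide) (by decide)
  have h₃ : prio 6 6 pinwheel (3, 2, 4, 5) (2, 1, 5, 2) :=
    prio_pinwheel (by decide) (by decide) (by decide) 3 2 (by decide) (by decide)
  have h₄ : prio 6 6 pinwheel (2, 1, 5, 2) (1, 0, 2, 3) :=
    prio_pinwheel (by decide) (by decide) (by decide) 2 1 (by decide) (by decide)
  exact ⟨.single h₁, (Relation.TransGen.single h₂).tail h₃ |>.tail h₄⟩

/-- DN₁ is strictly included in DQ₁: every neutralizable picture is
quaternate, but there is a quaternate picture that is not neutralizable;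
indeed one containing two rectangles α, β with α ≺ β and β ≺ α. -/
theorem DN_strictSubset_DQ :
    (∀ (m n : ℕ) (p : ℕ → ℕ → Del), DN m n p → DQ m n p) ∧
    ∃ (m n : ℕ) (p : ℕ → ℕ → Del), DQ m n p ∧ ¬ DN m n p ∧
      ∃ α β, IsRect m n p α ∧ IsRect m n p β ∧ α ≠ β ∧
        prec m n p α β ∧ prec m n p β α := by
  obtain ⟨hαβ, hβα⟩ := prec_pinwheel
  exact ⟨fun _ _ _ h => h.dQ, 6, 6, pinwheel, dQ_pinwheel,
    fun h => h.prec_irrefl _ (hαβ.trans hβα), _, _,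
    isRect_pinwheel _ (by decide), isRect_pinwheel _ (by decide), by decide, hαβ, hβα⟩
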